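/- Let a < b be real numbers, 0 < α < 1, and let f : [a,b] → ℝ be continuously differentiable with f(a) ≠ 0. Then the left Riemann–Liouville fractional derivative ₐD_t^α f(t) blows up at the left endpoint: |ₐD_t^α f(t)| → ∞ as t → a⁺. Consequently, if f is continuously differentiable and t ↦ ₐD_t^α f(t) extends to a continuous function on all of [a,b], then f(a) = 0. -/

import Mathlib

/-!
Integrating by parts moves the derivative onto `f`:
`∫_a^t (t-τ)^{-α} f(τ) dτ = f(a) (t-a)^{1-α}/(1-α) + ∫_a^t f'(τ) (t-τ)^{1-α}/(1-α) dτ`,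
and since `(t-τ)^{1-α}/(1-α) = ∫_τ^t (s-τ)^{-α} ds`, Fubini on the triangle `a < τ ≤ s < t` turns
the last integral into `∫_a^t K(s) ds` with `K(s) = ∫_a^s (s-τ)^{-α} f'(τ) dτ`. Dominated
convergence makes `K` continuous, so
`Γ(1-α) · ₐD_t^α f(t) = f(a) (t-a)^{-α} + K(t)` with `|K(t)| ≤ ‖f'‖_∞ (b-a)^{1-α}/(1-α)`.
The first term blows up as `t → a⁺` when `f(a) ≠ 0`, which a continuous extension cannot do.
-/

open MeasureTheory intervalIntegral Set Filter

/-- The left Riemann–Liouville fractional derivative of order `α`: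
`ₐD_t^α f(t) = (1/Γ(1-α)) · d/dt ∫_a^t (t-τ)^{-α} f(τ) dτ`. -/
noncomputable def leftRL (a α : ℝ) (f : ℝ → ℝ) (t : ℝ) : ℝ :=
  (1 / Real.Gamma (1 - α)) *
    deriv (fun s => ∫ τ in a..s, (s - τ) ^ (-α) * f τ) t

open Topology

section Triangle

variable {a t : ℝ}

theorem setIntegral_Ioc_ite_le_const {F : ℝ → ℝ} {s : ℝ} (hs : s ∈ Icc a t) :
    ∫ σ in Ioc a t, (if σ ≤ s then F σ else 0) = ∫ σ in a..s, F σ := by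
  have hind : (fun σ => if σ ≤ s then F σ else 0) = (Iic s).indicator F := by
    ext σ; simp only [indicator_apply, mem_Iic]
  rw [hind, setIntegral_indicator measurableSet_Iic, Ioc_inter_Iic, inf_eq_right.2 hs.2,
    intervalIntegral.integral_of_le hs.1]

theorem setIntegral_Ioc_ite_const_le {G : ℝ → ℝ} {σ : ℝ} (hσ : σ ∈ Ioc a t) :
    ∫ s in Ioc a t, (if σ ≤ s then G s else 0) = ∫ s in σ..t, G s := by
  have hind : (fun s => if σ ≤ s then G s else 0) = (Ici σ).indicator G := by
    ext s; simp only [indicator_apply, mem_Ici]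
  have hinter : Ioc a t ∩ Ici σ = Icc σ t := by
    ext s; simp only [mem_inter_iff, mem_Ioc, mem_Ici, mem_Icc]; grind
  rw [hind, setIntegral_indicator measurableSet_Ici, hinter, integral_Icc_eq_integral_Ioc,
    intervalIntegral.integral_of_le hσ.2]

theorem integral_integral_swap_triangle {F : ℝ → ℝ → ℝ} (hat : a ≤ t)
    (hF : Integrable (Function.uncurry fun s σ => if σ ≤ s then F s σ else 0)
      ((volume.restrict (Ioc a t)).prod (volume.restrict (Ioc a t)))) :
    ∫ s in a..t, ∫ σ in a..s, F s σ = ∫ σ in a..t, ∫ s in σ..t, F s σ := by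
  rw [intervalIntegral.integral_of_le hat, intervalIntegral.integral_of_le hat,
    ← setIntegral_congr_fun measurableSet_Ioc fun s hs =>
      setIntegral_Ioc_ite_le_const (F := F s) (Ioc_subset_Icc_self hs),
    ← setIntegral_congr_fun measurableSet_Ioc fun σ => setIntegral_Ioc_ite_const_le (G := (F · σ))]
  exact integral_integral_swap hF

end Triangle

section RpowKernel

variable {α : ℝ}

theorem intervalIntegrable_sub_rpow_neg (hα : α < 1) (c s : ℝ) :
    IntervalIntegrable (fun τ => (s - τ) ^ (-α)) volume c s := by
  simpa using ((intervalIntegrable_rpow' (by linarith) (a := 0) (b := s - c)).comp_sub_left s).symm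

theorem intervalIntegrable_rpow_neg_sub (hα : α < 1) (c t : ℝ) :
    IntervalIntegrable (fun s => (s - c) ^ (-α)) volume c t := by
  simpa using (intervalIntegrable_rpow' (by linarith) (a := 0) (b := t - c)).comp_sub_right c

theorem integral_sub_rpow_neg (hα : α < 1) (c s : ℝ) :
    ∫ τ in c..s, (s - τ) ^ (-α) = (s - c) ^ (1 - α) / (1 - α) := by
  rw [intervalIntegral.integral_comp_sub_left (fun x => x ^ (-α)), sub_self,
    integral_rpow (Or.inl (by linarith)), Real.zero_rpow (by linarith), neg_add_eq_sub, sub_zero]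

theorem integral_rpow_neg_sub (hα : α < 1) (c t : ℝ) :
    ∫ s in c..t, (s - c) ^ (-α) = (t - c) ^ (1 - α) / (1 - α) := by
  rw [intervalIntegral.integral_comp_sub_right (fun x => x ^ (-α)), sub_self,
    integral_rpow (Or.inl (by linarith)), Real.zero_rpow (by linarith), neg_add_eq_sub, sub_zero]

theorem integrable_ite_le_sub_rpow_neg_prod (hα : α < 1) (a t : ℝ) :
    Integrable (Function.uncurry fun s σ : ℝ => if σ ≤ s then (s - σ) ^ (-α) else 0)
      ((volume.restrict (Ioc a t)).prod (volume.restrict (Ioc a t))) := by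
  have hmeas : Measurable (Function.uncurry fun s σ : ℝ => if σ ≤ s then (s - σ) ^ (-α) else 0) :=
    Measurable.ite (measurableSet_le measurable_snd measurable_fst)
      ((measurable_fst.sub measurable_snd).pow_const _) measurable_const
  have hnonneg : ∀ s σ : ℝ, 0 ≤ if σ ≤ s then (s - σ) ^ (-α) else 0 := fun s σ => by
    split_ifs with h
    · exact Real.rpow_nonneg (sub_nonneg.2 h) _
    · exact le_rfl
  refine (integrable_prod_iff hmeas.aestronglyMeasurable).2 ⟨?_, ?_⟩
  · refine (ae_restrict_iff' measurableSet_Ioc).2 (ae_of_all _ fun s hs => ?_)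
    have hind : (fun σ : ℝ => if σ ≤ s then (s - σ) ^ (-α) else 0) =
        (Iic s).indicator fun σ => (s - σ) ^ (-α) := by
      ext σ; simp only [indicator_apply, mem_Iic]
    simp only [Function.uncurry_apply_pair]
    rw [hind, integrable_indicator_iff measurableSet_Iic, IntegrableOn,
      Measure.restrict_restrict measurableSet_Iic, Iic_inter_Ioc_of_le hs.2]
    exact (intervalIntegrable_iff_integrableOn_Ioc_of_le hs.1.le).1
      (intervalIntegrable_sub_rpow_neg hα a s)
  · have hcont : Continuous fun s : ℝ => (s - a) ^ (1 - α) / (1 - α) := by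
      fun_prop (disch := linarith)
    refine hcont.integrableOn_Ioc.congr ((ae_restrict_iff' measurableSet_Ioc).2
      (ae_of_all _ fun s hs => ?_))
    simp only [Function.uncurry_apply_pair, Real.norm_of_nonneg (hnonneg s _)]
    rw [setIntegral_Ioc_ite_le_const (Ioc_subset_Icc_self hs), integral_sub_rpow_neg hα]

end RpowKernel

/-- `Γ(1-α)` times the Riemann–Liouville integral of order `1 - α`, so that
`leftRL a α f = deriv (abelIntegral a α f) / Γ(1-α)`. -/
noncomputable def abelIntegral (a α : ℝ) (φ : ℝ → ℝ) (s : ℝ) : ℝ :=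
  ∫ τ in a..s, (s - τ) ^ (-α) * φ τ

section AbelIntegral

variable {a b α : ℝ}

theorem abs_abelIntegral_le (hα : α < 1) {φ : ℝ → ℝ} {M s : ℝ} (hs : a ≤ s)
    (hM : ∀ τ ∈ Ioc a s, |φ τ| ≤ M) :
    |abelIntegral a α φ s| ≤ M * ((s - a) ^ (1 - α) / (1 - α)) := by
  rw [← integral_sub_rpow_neg hα, ← intervalIntegral.integral_const_mul, ← Real.norm_eq_abs]
  refine intervalIntegral.norm_integral_le_of_norm_le hs (ae_of_all _ fun τ hτ => ?_)
    ((intervalIntegrable_sub_rpow_neg hα a s).const_mul M)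
  have hkernel : 0 ≤ (s - τ) ^ (-α) := Real.rpow_nonneg (by linarith [hτ.2]) _
  rw [norm_mul, Real.norm_of_nonneg hkernel, mul_comm, Real.norm_eq_abs]
  exact mul_le_mul_of_nonneg_right (hM τ hτ) hkernel

theorem abelIntegral_eq_add_integral_of_hasDerivAt (hα : α < 1) {f φ : ℝ → ℝ} {t : ℝ}
    (hat : a ≤ t) (hf : ContinuousOn f (Icc a t))
    (hderiv : ∀ x ∈ Ioo a t, HasDerivAt f (φ x) x) (hφ : IntervalIntegrable φ volume a t) :
    abelIntegral a α f t =
      f a * ((t - a) ^ (1 - α) / (1 - α)) + ∫ τ in a..t, φ τ * ((t - τ) ^ (1 - α) / (1 - α)) := by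
  have hα' : 1 - α ≠ 0 := by linarith
  -- `τ ↦ -(t - τ) ^ (1 - α) / (1 - α)` is a primitive of the kernel vanishing at `τ = t`
  have hprim : ∀ x ∈ Ioo a t,
      HasDerivAt (fun τ => -((t - τ) ^ (1 - α) / (1 - α))) ((t - x) ^ (-α)) x := by
    intro x hx
    refine ((((hasDerivAt_id' x).const_sub t).rpow_const (p := 1 - α)
      (Or.inl (sub_ne_zero.2 hx.2.ne'))).div_const (1 - α)).neg.congr_deriv ?_
    rw [sub_sub_cancel_left]
    field_simp
  have hprim_cont : Continuous fun τ => -((t - τ) ^ (1 - α) / (1 - α)) := by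
    fun_prop (disch := linarith)
  have hIoo : Ioo (min a t) (max a t) = Ioo a t := by rw [min_eq_left hat, max_eq_right hat]
  have hibp := intervalIntegral.integral_mul_deriv_eq_deriv_mul_of_hasDerivAt
    (by rwa [uIcc_of_le hat]) hprim_cont.continuousOn (hIoo ▸ hderiv) (hIoo ▸ hprim) hφ
    (intervalIntegrable_sub_rpow_neg hα a t)
  simp only [sub_self, Real.zero_rpow hα', zero_div, neg_zero, mul_zero, mul_neg,
    intervalIntegral.integral_neg, sub_neg_eq_add, zero_add] at hibp
  rw [abelIntegral, ← hibp]
  exact intervalIntegral.integral_congr fun τ _ => mul_comm _ _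

theorem integral_abelIntegral (hα : α < 1) {φ : ℝ → ℝ} (hφ : Continuous φ) {t : ℝ} (hat : a ≤ t) :
    ∫ s in a..t, abelIntegral a α φ s = ∫ τ in a..t, φ τ * ((t - τ) ^ (1 - α) / (1 - α)) := by
  obtain ⟨M, hM⟩ := isCompact_Icc.exists_bound_of_continuousOn (hφ.continuousOn (s := Icc a t))
  have hint : Integrable (Function.uncurry fun s σ => if σ ≤ s then (s - σ) ^ (-α) * φ σ else 0)
      ((volume.restrict (Ioc a t)).prod (volume.restrict (Ioc a t))) := by
    refine ((integrable_ite_le_sub_rpow_neg_prod hα a t).const_mul M).mono' ?_ ?_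
    · exact (Measurable.ite (measurableSet_le measurable_snd measurable_fst)
        (((measurable_fst.sub measurable_snd).pow_const _).mul (hφ.measurable.comp measurable_snd))
        measurable_const).aestronglyMeasurable
    · rw [Measure.prod_restrict, ae_restrict_iff' (measurableSet_Ioc.prod measurableSet_Ioc)]
      refine ae_of_all _ fun ⟨s, σ⟩ hp => ?_
      simp only [Function.uncurry_apply_pair]
      split_ifs with h
      · have hkernel : 0 ≤ (s - σ) ^ (-α) := Real.rpow_nonneg (sub_nonneg.2 h) _
        rw [norm_mul, Real.norm_of_nonneg hkernel, mul_comm]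
        exact mul_le_mul_of_nonneg_right (hM σ (Ioc_subset_Icc_self hp.2)) hkernel
      · simp
  unfold abelIntegral
  rw [integral_integral_swap_triangle hat hint]
  refine intervalIntegral.integral_congr fun σ _ => ?_
  rw [intervalIntegral.integral_mul_const, integral_rpow_neg_sub hα, mul_comm]

theorem abelIntegral_eq_integral_ite {φ : ℝ → ℝ} {u : ℝ} (hu : u ∈ Icc a b) :
    abelIntegral a α φ u = ∫ v in 0..(b - a), if v ≤ u - a then v ^ (-α) * φ (u - v) else 0 := by
  have hu' : u - a ∈ Icc 0 (b - a) := ⟨by linarith [hu.1], by linarith [hu.2]⟩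
  have hsubst := intervalIntegral.integral_comp_sub_left (fun v => v ^ (-α) * φ (u - v)) u
    (a := a) (b := u)
  simp only [sub_sub_cancel, sub_self] at hsubst
  rw [intervalIntegral.integral_of_le (hu'.1.trans hu'.2), setIntegral_Ioc_ite_le_const hu',
    abelIntegral, hsubst]

theorem continuousOn_abelIntegral (hα : α < 1) {φ : ℝ → ℝ} (hφ : Continuous φ) :
    ContinuousOn (abelIntegral a α φ) (Icc a b) := by
  rcases lt_or_ge b a with hba | hab
  · simp [Icc_eq_empty_of_lt hba]
  -- after `τ = u - v` the range is fixed and the integrand is continuous in `u` off `v = u - a`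
  refine ContinuousOn.congr (fun u₀ hu₀ => ContinuousAt.continuousWithinAt ?_)
    fun u hu => abelIntegral_eq_integral_ite hu
  obtain ⟨M, hM⟩ :=
    isCompact_Icc.exists_bound_of_continuousOn (hφ.continuousOn (s := Icc a (u₀ + 1)))
  have hM0 : 0 ≤ M := (norm_nonneg _).trans (hM a ⟨le_rfl, by linarith [hu₀.1]⟩)
  refine intervalIntegral.continuousAt_of_dominated_interval (bound := fun v => M * v ^ (-α))
    (Eventually.of_forall fun u => ?_) ?_
    ((intervalIntegrable_rpow' (by linarith)).const_mul M) ?_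
  · exact (Measurable.ite measurableSet_Iic ((measurable_id.pow_const _).mul
      (hφ.measurable.comp (measurable_const.sub measurable_id))) measurable_const)
      |>.aestronglyMeasurable
  · filter_upwards [eventually_lt_nhds (lt_add_one u₀)] with u hu
    refine ae_of_all _ fun v hv => ?_
    rw [uIoc_of_le (by linarith)] at hv
    have hkernel : 0 ≤ v ^ (-α) := Real.rpow_nonneg hv.1.le _
    split_ifs with h
    · rw [norm_mul, Real.norm_of_nonneg hkernel, mul_comm]
      exact mul_le_mul_of_nonneg_right (hM _ ⟨by linarith, by linarith [hv.1]⟩) hkernel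
    · simpa using mul_nonneg hM0 hkernel
  · filter_upwards [Measure.ae_ne volume (u₀ - a)] with v hv _
    rcases hv.lt_or_gt with hlt | hgt
    · have hcont : Continuous fun u => v ^ (-α) * φ (u - v) := by fun_prop
      refine hcont.continuousAt.congr ?_
      filter_upwards [eventually_gt_nhds (by linarith : v + a < u₀)] with u hu
      rw [if_pos (by linarith)]
    · refine (continuousAt_const (y := (0 : ℝ))).congr ?_
      filter_upwards [eventually_lt_nhds (by linarith : u₀ < v + a)] with u hu
      rw [if_neg (by linarith)]

theorem hasDerivAt_abelIntegral (hα : α < 1) {f φ : ℝ → ℝ} (hf : ContinuousOn f (Icc a b))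
    (hderiv : ∀ x ∈ Ioo a b, HasDerivAt f (φ x) x) (hφ : Continuous φ) {t : ℝ}
    (ht : t ∈ Ioo a b) :
    HasDerivAt (abelIntegral a α f) (f a * (t - a) ^ (-α) + abelIntegral a α φ t) t := by
  have hK : ContinuousOn (abelIntegral a α φ) (Icc a b) := continuousOn_abelIntegral hα hφ
  have hpow :
      HasDerivAt (fun s => f a * ((s - a) ^ (1 - α) / (1 - α))) (f a * (t - a) ^ (-α)) t := by
    refine ((((hasDerivAt_id' t).sub_const a).rpow_const (p := 1 - α)
      (Or.inl (sub_ne_zero.2 ht.1.ne'))).div_const (1 - α)).const_mul (f a) |>.congr_deriv ?_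
    have : 1 - α ≠ 0 := by linarith
    field_simp
    rw [sub_sub_cancel_left]
  have hprimitive :
      HasDerivAt (fun s => ∫ u in a..s, abelIntegral a α φ u) (abelIntegral a α φ t) t :=
    intervalIntegral.integral_hasDerivAt_right
      ((hK.mono (uIcc_subset_Icc ⟨le_rfl, (ht.1.trans ht.2).le⟩
        (Ioo_subset_Icc_self ht))).intervalIntegrable)
      ((hK.mono Ioo_subset_Icc_self).stronglyMeasurableAtFilter isOpen_Ioo t ht)
      (hK.continuousAt (Icc_mem_nhds ht.1 ht.2))
  refine (hpow.add hprimitive).congr_of_eventuallyEq ?_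
  filter_upwards [Ioo_mem_nhds ht.1 ht.2] with s hs
  rw [abelIntegral_eq_add_integral_of_hasDerivAt hα hs.1.le (hf.mono (Icc_subset_Icc_right hs.2.le))
    (fun x hx => hderiv x ⟨hx.1, hx.2.trans hs.2⟩) (hφ.intervalIntegrable a s),
    Pi.add_apply, integral_abelIntegral hα hφ hs.1.le]

end AbelIntegral

theorem exists_continuous_hasDerivAt_of_contDiffOn {f : ℝ → ℝ} {a b : ℝ} (hab : a < b)
    (hf : ContDiffOn ℝ 1 f (Icc a b)) :
    ∃ φ : ℝ → ℝ, Continuous φ ∧ ∀ x ∈ Ioo a b, HasDerivAt f (φ x) x := by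
  refine ⟨IccExtend hab.le fun x => derivWithin f (Icc a b) x, ?_, fun x hx => ?_⟩
  · exact continuous_IccExtend_iff.2 <| (hf.continuousOn_derivWithin (uniqueDiffOn_Icc hab)
      le_rfl).comp_continuous continuous_subtype_val Subtype.prop
  · rw [IccExtend_of_mem _ _ (Ioo_subset_Icc_self hx)]
    exact ((hf.differentiableOn one_ne_zero) x (Ioo_subset_Icc_self hx)).hasDerivWithinAt.hasDerivAt
      (Icc_mem_nhds hx.1 hx.2)

theorem tendsto_abs_mul_rpow_neg_add_atTop {a α c C : ℝ} (hα : 0 < α) (hc : c ≠ 0) {K : ℝ → ℝ}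
    (hK : ∀ᶠ t in 𝓝[>] a, |K t| ≤ C) :
    Tendsto (fun t => |c * (t - a) ^ (-α) + K t|) (𝓝[>] a) atTop := by
  have hshift : Tendsto (fun t => t - a) (𝓝[>] a) (𝓝[>] 0) := by
    have := (continuous_sub_right a).continuousWithinAt.tendsto_nhdsWithin
      (x := a) (s := Ioi a) (t := Ioi 0) fun t ht => sub_pos.2 ht
    rwa [sub_self] at this
  have hpow := (tendsto_rpow_neg_nhdsGT_zero (neg_neg_of_pos hα)).comp hshift
  refine tendsto_atTop_mono' _ ?_
    (tendsto_atTop_add_const_right _ (-C) (hpow.const_mul_atTop (abs_pos.2 hc)))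
  filter_upwards [hK, self_mem_nhdsWithin] with t hKt ht
  have hpos : 0 ≤ (t - a) ^ (-α) := Real.rpow_nonneg (sub_nonneg.2 (le_of_lt ht)) _
  have := abs_sub_abs_le_abs_add (c * (t - a) ^ (-α)) (K t)
  rw [abs_mul, abs_of_nonneg hpos] at this
  simp only [Function.comp_apply]
  linarith

theorem not_tendsto_abs_atTop_of_continuousOn {g h : ℝ → ℝ} {a b : ℝ} (hab : a < b)
    (hg : ContinuousOn g (Icc a b)) (hgh : ∀ t ∈ Ioc a b, g t = h t) :
    ¬ Tendsto (fun t => |h t|) (𝓝[>] a) atTop := by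
  have hg' : Tendsto g (𝓝[>] a) (𝓝 (g a)) :=
    (hg a (left_mem_Icc.2 hab.le)).mono_of_mem_nhdsWithin
      (mem_of_superset (Ioc_mem_nhdsGT hab) Ioc_subset_Icc_self)
  refine not_tendsto_atTop_of_tendsto_nhds (hg'.abs.congr' ?_)
  filter_upwards [Ioc_mem_nhdsGT hab] with t ht
  rw [hgh t ht]

/-- If `f` is continuously differentiable on `[a,b]` and `f(a) ≠ 0`, then the left
Riemann–Liouville fractional derivative `ₐD_t^α f(t)` blows up as `t → a⁺`.
Consequently, if `t ↦ ₐD_t^α f(t)` exists on `(a,b]` and extends to a continuous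
function on all of `[a,b]`, then `f(a) = 0`. -/
theorem leftRL_blowup_of_ne_zero_at_left_endpoint
    (a b α : ℝ) (hab : a < b) (hα0 : 0 < α) (hα1 : α < 1)
    (f : ℝ → ℝ) (hf : ContDiffOn ℝ 1 f (Set.Icc a b)) :
    (f a ≠ 0 →
      Filter.Tendsto (fun t => |leftRL a α f t|) (nhdsWithin a (Set.Ioi a))
        Filter.atTop) ∧
    (∀ g : ℝ → ℝ,
      (∀ t ∈ Set.Ioc a b,
        DifferentiableAt ℝ (fun s => ∫ τ in a..s, (s - τ) ^ (-α) * f τ) t) →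
      ContinuousOn g (Set.Icc a b) →
      (∀ t ∈ Set.Ioc a b, g t = leftRL a α f t) →
      f a = 0) := by
  obtain ⟨φ, hφ, hderiv⟩ := exists_continuous_hasDerivAt_of_contDiffOn hab hf
  obtain ⟨M, hM⟩ := isCompact_Icc.exists_bound_of_continuousOn (hφ.continuousOn (s := Icc a b))
  have hΓ : 0 < Real.Gamma (1 - α) := Real.Gamma_pos_of_pos (by linarith)
  have hblowup : f a ≠ 0 → Tendsto (fun t => |leftRL a α f t|) (𝓝[>] a) atTop := by
    intro hfa
    have hK : ∀ᶠ t in 𝓝[>] a, |abelIntegral a α φ t| ≤ M * ((b - a) ^ (1 - α) / (1 - α)) := by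
      filter_upwards [Ioo_mem_nhdsGT hab] with t ht
      refine (abs_abelIntegral_le hα1 ht.1.le fun τ hτ =>
        hM τ ⟨hτ.1.le, hτ.2.trans ht.2.le⟩).trans ?_
      have hM0 : 0 ≤ M := (norm_nonneg _).trans (hM a (left_mem_Icc.2 hab.le))
      gcongr <;> linarith [ht.1, ht.2]
    refine ((tendsto_abs_mul_rpow_neg_add_atTop hα0 hfa hK).atTop_div_const hΓ).congr' ?_
    filter_upwards [Ioo_mem_nhdsGT hab] with t ht
    have hleftRL : leftRL a α f t = 1 / Real.Gamma (1 - α) * deriv (abelIntegral a α f) t := rfl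
    rw [hleftRL, (hasDerivAt_abelIntegral hα1 hf.continuousOn hderiv hφ ht).deriv, abs_mul,
      abs_of_pos (one_div_pos.2 hΓ), one_div_mul_eq_div]
  exact ⟨hblowup, fun g _ hg hgf => not_not.1 fun hfa =>
    not_tendsto_abs_atTop_of_continuousOn hab hg hgf (hblowup hfa)⟩
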